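/- arXiv:1304.0783 — 4 statements merged into one kernel-verified Lean document; each statement's English description precedes it below -/
import Mathlib

section
/- Let G be a finite abelian group with a maximally non-commutative factor system ω, meaning the subgroup G(ω) = {g ∈ G : V(g)V(h)=V(h)V(g) ∀h ∈ G} is trivial. Then the induced homomorphism φ_ω : G → G* is an isomorphism; in particular, for every character χ ∈ G* there is a unique g ∈ G with χ_g^ω = χ. -/
/-- If the factor system is maximally non-commutative (the subgroup of `g` with
`V g` commuting with all `V h` is trivial), then `φ_ω : g ↦ χ_g^ω` is an isomorphism onto the
character group: it is injective, and every character `ξ : G →* ℂˣ` equals `χ_g^ω` for a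
unique `g`. -/
theorem stmt_5 {n : ℕ} {G : Type*} [CommGroup G] [Fintype G] (hn : 0 < n)
    (V : G → Matrix (Fin n) (Fin n) ℂ) (ω : G → G → ℂ)
    (hω : ∀ g₁ g₂, ‖ω g₁ g₂‖ = 1)
    (hunit : ∀ g, IsUnit (V g))
    (hV : ∀ g₁ g₂, V g₁ * V g₂ = ω g₁ g₂ • V (g₁ * g₂))
    (χ : G → G → ℂ)
    (hχ : ∀ g g', V g' * V g = χ g g' • (V g * V g'))
    (hmax : ∀ g, (∀ h, V g * V h = V h * V g) → g = 1) :
    (∀ g₁ g₂, (∀ g', χ g₁ g' = χ g₂ g') → g₁ = g₂) ∧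
    (∀ ξ : G →* ℂˣ, ∃! g : G, ∀ g', χ g g' = (ξ g' : ℂ)) := by
  haveI : NeZero n := ⟨hn.ne'⟩
  -- cancellation of scalars against a nonzero matrix
  have hcancel : ∀ (a b : ℂ) (M : Matrix (Fin n) (Fin n) ℂ), M ≠ 0 →
      a • M = b • M → a = b := by
    intro a b M hM h
    obtain ⟨i, hi⟩ := Function.ne_iff.mp hM
    obtain ⟨j, hj⟩ := Function.ne_iff.mp hi
    have h' : a * M i j = b * M i j := by
      have := congrFun (congrFun h i) j
      simpa [Matrix.smul_apply] using this
    exact mul_right_cancel₀ hj h'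
  have hVne : ∀ g, V g ≠ 0 := fun g => (hunit g).ne_zero
  have hVVne : ∀ g h, V g * V h ≠ 0 := fun g h => ((hunit g).mul (hunit h)).ne_zero
  have hωne : ∀ g₁ g₂, ω g₁ g₂ ≠ 0 := by
    intro g₁ g₂ h
    have := hω g₁ g₂
    rw [h] at this
    simp at this
  -- χ values are nonzero
  have hχne : ∀ g g', χ g g' ≠ 0 := by
    intro g g' h
    have := hχ g g'
    rw [h, zero_smul] at this
    exact hVVne g' g this
  -- V 1 is a scalar matrix
  have hV1 : V 1 = ω 1 1 • (1 : Matrix (Fin n) (Fin n) ℂ) := by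
    have h1 : V 1 * V 1 = V 1 * (ω 1 1 • 1) := by
      rw [hV 1 1, mul_smul_comm]; simp
    exact (hunit 1).mul_left_cancel h1
  -- χ g 1 = 1
  have hχ_one_right : ∀ g, χ g 1 = 1 := by
    intro g
    have h1 : V 1 * V g = (ω 1 1 : ℂ) • V g := by rw [hV1, smul_mul_assoc, one_mul]
    have h2 : χ g 1 • (V g * V 1) = (χ g 1 * ω 1 1) • V g := by
      rw [hV1, mul_smul_comm, mul_one, smul_smul]
    have := (hχ g 1).symm.trans h1
    rw [h2] at this
    have := hcancel _ _ _ (hVne g) this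
    have h3 : χ g 1 * ω 1 1 = 1 * ω 1 1 := by rw [this, one_mul]
    exact mul_right_cancel₀ (hωne 1 1) h3
  -- χ 1 g' = 1
  have hχ_one_left : ∀ g', χ 1 g' = 1 := by
    intro g'
    have h1 : V g' * V 1 = (ω 1 1 : ℂ) • V g' := by rw [hV1, mul_smul_comm, mul_one]
    have h2 : χ 1 g' • (V 1 * V g') = (χ 1 g' * ω 1 1) • V g' := by
      rw [hV1, smul_mul_assoc, one_mul, smul_smul]
    have := (hχ 1 g').symm.trans h1
    rw [h2] at this
    have := hcancel _ _ _ (hVne g') this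
    have h3 : χ 1 g' * ω 1 1 = 1 * ω 1 1 := by rw [this, one_mul]
    exact mul_right_cancel₀ (hωne 1 1) h3
  -- χ is multiplicative in the first argument
  have hmul1 : ∀ g₁ g₂ g', χ (g₁ * g₂) g' = χ g₁ g' * χ g₂ g' := by
    intro g₁ g₂ g'
    have lhs : V g' * (V g₁ * V g₂) =
        (ω g₁ g₂ * χ (g₁ * g₂) g') • (V (g₁ * g₂) * V g') := by
      rw [hV g₁ g₂, mul_smul_comm, hχ (g₁ * g₂) g', smul_smul]
    have rhs : V g' * (V g₁ * V g₂) =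
        (χ g₁ g' * χ g₂ g' * ω g₁ g₂) • (V (g₁ * g₂) * V g') := by
      calc V g' * (V g₁ * V g₂) = (V g' * V g₁) * V g₂ := by rw [mul_assoc]
        _ = (χ g₁ g' • (V g₁ * V g')) * V g₂ := by rw [hχ g₁ g']
        _ = χ g₁ g' • (V g₁ * (V g' * V g₂)) := by
            rw [smul_mul_assoc, mul_assoc]
        _ = χ g₁ g' • (V g₁ * (χ g₂ g' • (V g₂ * V g'))) := by rw [hχ g₂ g']
        _ = (χ g₁ g' * χ g₂ g') • ((V g₁ * V g₂) * V g') := by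
            rw [mul_smul_comm, smul_smul, mul_assoc]
        _ = (χ g₁ g' * χ g₂ g') • ((ω g₁ g₂ • V (g₁ * g₂)) * V g') := by rw [hV g₁ g₂]
        _ = (χ g₁ g' * χ g₂ g' * ω g₁ g₂) • (V (g₁ * g₂) * V g') := by
            rw [smul_mul_assoc, smul_smul]
    have := hcancel _ _ _ (hVVne (g₁ * g₂) g') (lhs.symm.trans rhs)
    have h3 : χ (g₁ * g₂) g' * ω g₁ g₂ = χ g₁ g' * χ g₂ g' * ω g₁ g₂ := by
      rw [← this]; ring
    exact mul_right_cancel₀ (hωne g₁ g₂) h3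
  -- χ is multiplicative in the second argument
  have hmul2 : ∀ g g₁' g₂', χ g (g₁' * g₂') = χ g g₁' * χ g g₂' := by
    intro g g₁' g₂'
    have lhs : (V g₁' * V g₂') * V g =
        (ω g₁' g₂' * χ g (g₁' * g₂')) • (V g * V (g₁' * g₂')) := by
      rw [hV g₁' g₂', smul_mul_assoc, hχ g (g₁' * g₂'), smul_smul]
    have rhs : (V g₁' * V g₂') * V g =
        (χ g g₁' * χ g g₂' * ω g₁' g₂') • (V g * V (g₁' * g₂')) := by
      calc (V g₁' * V g₂') * V g = V g₁' * (V g₂' * V g) := by rw [mul_assoc]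
        _ = V g₁' * (χ g g₂' • (V g * V g₂')) := by rw [hχ g g₂']
        _ = χ g g₂' • ((V g₁' * V g) * V g₂') := by
            rw [mul_smul_comm, mul_assoc]
        _ = χ g g₂' • ((χ g g₁' • (V g * V g₁')) * V g₂') := by rw [hχ g g₁']
        _ = (χ g g₁' * χ g g₂') • (V g * (V g₁' * V g₂')) := by
            rw [smul_mul_assoc, smul_smul, mul_assoc, mul_comm (χ g g₂')]
        _ = (χ g g₁' * χ g g₂') • (V g * (ω g₁' g₂' • V (g₁' * g₂'))) := by rw [hV g₁' g₂']
        _ = (χ g g₁' * χ g g₂' * ω g₁' g₂') • (V g * V (g₁' * g₂')) := by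
            rw [mul_smul_comm, smul_smul]
    have := hcancel _ _ _ (hVVne g (g₁' * g₂')) (lhs.symm.trans rhs)
    have h3 : χ g (g₁' * g₂') * ω g₁' g₂' = χ g g₁' * χ g g₂' * ω g₁' g₂' := by
      rw [← this]; ring
    exact mul_right_cancel₀ (hωne g₁' g₂') h3
  -- injectivity
  have hinj : ∀ g₁ g₂, (∀ g', χ g₁ g' = χ g₂ g') → g₁ = g₂ := by
    intro g₁ g₂ h
    have hinv : ∀ g g', χ g⁻¹ g' = (χ g g')⁻¹ := by
      intro g g'
      have := hmul1 g⁻¹ g g'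
      rw [inv_mul_cancel, hχ_one_left] at this
      exact eq_inv_of_mul_eq_one_left this.symm
    have htriv : ∀ g', χ (g₁ * g₂⁻¹) g' = 1 := by
      intro g'
      rw [hmul1, hinv, h g', mul_inv_cancel₀ (hχne g₂ g')]
    have hcomm : ∀ h', V (g₁ * g₂⁻¹) * V h' = V h' * V (g₁ * g₂⁻¹) := by
      intro h'
      have := hχ (g₁ * g₂⁻¹) h'
      rw [htriv h', one_smul] at this
      exact this.symm
    have := hmax _ hcomm
    rwa [mul_inv_eq_one] at this
  refine ⟨hinj, ?_⟩
  -- surjectivity via duality for finite abelian groups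
  haveI : Finite G := inferInstance
  haveI : NeZero ((Monoid.exponent G : ℂ)) :=
    ⟨Nat.cast_ne_zero.mpr Monoid.exponent_ne_zero_of_finite⟩
  obtain ⟨e⟩ := CommGroup.monoidHom_mulEquiv_of_hasEnoughRootsOfUnity G ℂ
  -- the map g ↦ χ g as a homomorphism into the character group
  let f : G → (G →* ℂˣ) := fun g =>
    { toFun := fun g' => Units.mk0 (χ g g') (hχne g g')
      map_one' := by ext; simp [hχ_one_right g]
      map_mul' := by intro a b; ext; simp [hmul2 g a b] }
  have hf : Function.Injective f := by
    intro g₁ g₂ h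
    refine hinj g₁ g₂ fun g' => ?_
    have := congrArg (fun φ => ((φ g' : ℂˣ) : ℂ)) h
    simpa [f] using this
  have hsurj : Function.Surjective f := by
    have hinj' : Function.Injective (e ∘ f) := e.injective.comp hf
    have hsurj' : Function.Surjective (e ∘ f) := Finite.surjective_of_injective hinj'
    intro ξ
    obtain ⟨g, hg⟩ := hsurj' (e ξ)
    exact ⟨g, e.injective hg⟩
  intro ξ
  obtain ⟨g, hg⟩ := hsurj ξ
  refine ⟨g, fun g' => ?_, fun g₀ hg₀ => ?_⟩
  · have := congrArg (fun φ => ((φ g' : ℂˣ) : ℂ)) hg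
    simpa [f] using this
  · refine hinj g₀ g fun g' => ?_
    have h1 : χ g g' = (ξ g' : ℂ) := by
      have := congrArg (fun φ => ((φ g' : ℂˣ) : ℂ)) hg
      simpa [f] using this
    rw [hg₀ g', h1]
end

section
/- Let G be a finite abelian group of order n with a maximally non-commutative factor system ω. Then any irreducible projective representation V of G with factor system ω has dimension D satisfying D² = |G|. (Consequently |G| must be a perfect square.) -/
open Matrix

/-- An irreducible unitary projective representation of a finite abelian group `G`
with maximally non-commutative factor system has dimension `D` with `D² = |G|`.
(Irreducibility is expressed via Schur's lemma: anything commuting with all `V g` is scalar.) -/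
theorem stmt_8 {D : ℕ} (hD : 0 < D) {G : Type*} [CommGroup G] [Fintype G]
    (V : G → Matrix (Fin D) (Fin D) ℂ) (ω : G → G → ℂ)
    (hω : ∀ g₁ g₂, ‖ω g₁ g₂‖ = 1)
    (hU : ∀ g, V g * (V g)ᴴ = 1)
    (hV : ∀ g₁ g₂, V g₁ * V g₂ = ω g₁ g₂ • V (g₁ * g₂))
    (hmax : ∀ g, (∀ h, V g * V h = V h * V g) → g = 1)
    (hirr : ∀ W : Matrix (Fin D) (Fin D) ℂ, (∀ g, W * V g = V g * W) → ∃ c : ℂ, W = c • 1) :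
    D ^ 2 = Fintype.card G := by
  classical
  have hDne : (D : ℂ) ≠ 0 := Nat.cast_ne_zero.mpr hD.ne'
  haveI : Nonempty (Fin D) := ⟨⟨0, hD⟩⟩
  have hωne : ∀ g h, ω g h ≠ 0 := by
    intro g h h0
    have := hω g h
    rw [h0] at this
    simp at this
  have hωconj : ∀ g h, (starRingEnd ℂ) (ω g h) * ω g h = 1 := by
    intro g h
    rw [mul_comm, Complex.mul_conj, Complex.normSq_eq_norm_sq, hω]
    norm_num
  have hHU : ∀ g, (V g)ᴴ * V g = 1 := fun g => mul_eq_one_comm.mp (hU g)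
  have hmulne : ∀ A B : Matrix (Fin D) (Fin D) ℂ, A * B = 1 → A ≠ 0 := by
    intro A B h h0
    rw [h0, zero_mul] at h
    exact one_ne_zero h.symm
  have hVne : ∀ g, V g ≠ 0 := fun g => hmulne _ _ (hU g)
  have hVVne : ∀ g h, V g * V h ≠ 0 := by
    intro g h
    apply hmulne _ ((V h)ᴴ * (V g)ᴴ)
    rw [mul_assoc, ← mul_assoc (V h), hU h, one_mul, hU g]
  set β : G → G → ℂ := fun g h => ω g h / ω h g with hβdef
  have hβne : ∀ g h, β g h ≠ 0 := fun g h => div_ne_zero (hωne _ _) (hωne _ _)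
  have comm : ∀ g h, V g * V h = β g h • (V h * V g) := by
    intro g h
    rw [hV, hV, mul_comm h g, smul_smul, hβdef]
    simp only
    rw [div_mul_cancel₀ _ (hωne h g)]
  have cancel : ∀ (a b : ℂ) (X : Matrix (Fin D) (Fin D) ℂ), X ≠ 0 → a • X = b • X → a = b := by
    intro a b X hX hab
    have h0 : (a - b) • X = 0 := by rw [sub_smul, hab, sub_self]
    rcases smul_eq_zero.mp h0 with h | h
    · exact sub_eq_zero.mp h
    · exact absurd h hX
  have βmul : ∀ g₁ g₂ h, β (g₁ * g₂) h = β g₁ h * β g₂ h := by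
    intro g₁ g₂ h
    have e1 : V g₁ * V g₂ * V h = (ω g₁ g₂ * β (g₁ * g₂) h) • (V h * V (g₁ * g₂)) := by
      rw [hV g₁ g₂, smul_mul_assoc, comm (g₁ * g₂) h, smul_smul]
    have e2 : V g₁ * V g₂ * V h = (β g₂ h * β g₁ h * ω g₁ g₂) • (V h * V (g₁ * g₂)) := by
      calc V g₁ * V g₂ * V h = V g₁ * (β g₂ h • (V h * V g₂)) := by rw [mul_assoc, comm g₂ h]
        _ = β g₂ h • (V g₁ * V h * V g₂) := by rw [mul_smul_comm, mul_assoc]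
        _ = β g₂ h • ((β g₁ h • (V h * V g₁)) * V g₂) := by rw [comm g₁ h]
        _ = (β g₂ h * β g₁ h) • (V h * (V g₁ * V g₂)) := by
              rw [smul_mul_assoc, smul_smul, mul_assoc]
        _ = (β g₂ h * β g₁ h) • (V h * (ω g₁ g₂ • V (g₁ * g₂))) := by rw [hV g₁ g₂]
        _ = (β g₂ h * β g₁ h * ω g₁ g₂) • (V h * V (g₁ * g₂)) := by
              rw [mul_smul_comm, smul_smul]
    have hcc := cancel _ _ _ (hVVne h (g₁ * g₂)) (e1.symm.trans e2)
    exact mul_left_cancel₀ (hωne g₁ g₂) (by linear_combination hcc :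
      ω g₁ g₂ * β (g₁ * g₂) h = ω g₁ g₂ * (β g₁ h * β g₂ h))
  have βswap : ∀ g h, β g h * β h g = 1 := by
    intro g h
    have e := comm g h
    rw [comm h g, smul_smul] at e
    exact (cancel 1 _ _ (hVVne g h) (by rw [one_smul]; exact e)).symm
  have βinv : ∀ g h, β h g = (β g h)⁻¹ :=
    fun g h => eq_inv_of_mul_eq_one_left (by rw [mul_comm]; exact βswap g h)
  have β1 : ∀ h : G, β 1 h = 1 := by
    intro h
    have h1 := βmul 1 1 h
    rw [one_mul] at h1
    exact (mul_left_cancel₀ (hβne 1 h)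
      (by rw [← h1, mul_one] : β 1 h * 1 = β 1 h * β 1 h)).symm
  have βmul2 : ∀ g h₁ h₂ : G, β g (h₁ * h₂) = β g h₁ * β g h₂ := by
    intro g h₁ h₂
    rw [βinv (h₁ * h₂) g, βmul, mul_inv, ← βinv h₁ g, ← βinv h₂ g]
  have hnontriv : ∀ m : G, m ≠ 1 → ∃ h, β m h ≠ 1 := by
    intro m hm
    by_contra hall
    push_neg at hall
    exact hm (hmax m (fun h => by rw [comm m h, hall h, one_smul]))
  have sumβ : ∀ h : G, h ≠ 1 → ∑ k : G, β h k = 0 := by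
    intro h hh
    obtain ⟨k₀, hk₀⟩ := hnontriv h hh
    have hS : ∑ k : G, β h k = β h k₀ * ∑ k : G, β h k := by
      rw [Finset.mul_sum]
      exact Fintype.sum_equiv (Equiv.mulLeft k₀⁻¹) _ _ (fun k => by
        simp only [Equiv.coe_mulLeft]
        rw [← βmul2, mul_inv_cancel_left])
    have h0 : (1 - β h k₀) * ∑ k : G, β h k = 0 := by linear_combination hS
    rcases mul_eq_zero.mp h0 with h1 | h2
    · exact absurd (by linear_combination -h1 : β h k₀ = 1) hk₀
    · exact h2
  have trace0 : ∀ m : G, m ≠ 1 → trace (V m) = 0 := by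
    intro m hm
    obtain ⟨h, hh⟩ := hnontriv m hm
    have hβhm : β h m ≠ 1 := by
      intro e
      apply hh
      have hsw := βswap m h
      rw [e, mul_one] at hsw
      exact hsw
    have key : V h * V m * (V h)ᴴ = β h m • V m := by
      rw [comm h m, smul_mul_assoc, mul_assoc, hU h, mul_one]
    have tr : trace (V m) = β h m * trace (V m) := by
      calc trace (V m) = trace ((V h)ᴴ * (V h * V m)) := by rw [← mul_assoc, hHU, one_mul]
        _ = trace (V h * V m * (V h)ᴴ) := (trace_mul_comm _ _).symm
        _ = β h m * trace (V m) := by rw [key, trace_smul, smul_eq_mul]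
    rcases mul_eq_zero.mp (by linear_combination tr : (1 - β h m) * trace (V m) = 0) with h1 | h2
    · exact absurd (by linear_combination -h1 : β h m = 1) hβhm
    · exact h2
  have hV1 : V 1 = ω 1 1 • 1 := by
    have h1 : V 1 * V 1 = ω 1 1 • V 1 := by
      have := hV 1 1
      rwa [one_mul] at this
    calc V 1 = V 1 * V 1 * (V 1)ᴴ := by rw [mul_assoc, hU, mul_one]
      _ = ω 1 1 • (V 1 * (V 1)ᴴ) := by rw [h1, smul_mul_assoc]
      _ = ω 1 1 • 1 := by rw [hU]
  have hcne : ∀ k : G, ω k k⁻¹ * ω 1 1 ≠ 0 := fun k => mul_ne_zero (hωne _ _) (hωne _ _)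
  have hadj : ∀ k : G, (V k)ᴴ = (ω k k⁻¹ * ω 1 1)⁻¹ • V k⁻¹ := by
    intro k
    have hc : V k * V k⁻¹ = (ω k k⁻¹ * ω 1 1) • 1 := by
      rw [hV k k⁻¹, mul_inv_cancel, hV1, smul_smul]
    have h2 : V k * ((ω k k⁻¹ * ω 1 1)⁻¹ • V k⁻¹) = 1 := by
      rw [mul_smul_comm, hc, smul_smul, inv_mul_cancel₀ (hcne k), one_smul]
    calc (V k)ᴴ = (V k)ᴴ * (V k * ((ω k k⁻¹ * ω 1 1)⁻¹ • V k⁻¹)) := by rw [h2, mul_one]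
      _ = ((V k)ᴴ * V k) * ((ω k k⁻¹ * ω 1 1)⁻¹ • V k⁻¹) := (mul_assoc _ _ _).symm
      _ = (ω k k⁻¹ * ω 1 1)⁻¹ • V k⁻¹ := by rw [hHU, one_mul]
  have orth : ∀ g k : G, trace ((V k)ᴴ * V g) = if g = k then (D : ℂ) else 0 := by
    intro g k
    by_cases hgk : g = k
    · subst hgk
      rw [if_pos rfl, hHU, trace_one]
      simp
    · rw [if_neg hgk, hadj k, smul_mul_assoc, trace_smul, hV k⁻¹ g, trace_smul,
        trace0 (k⁻¹ * g) (fun e => hgk (inv_mul_eq_one.mp e).symm)]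
      simp
  -- linear independence ⇒ card G ≤ D^2
  have hLI : LinearIndependent ℂ V := by
    rw [Fintype.linearIndependent_iff]
    intro c hc k
    have h0 : trace ((V k)ᴴ * ∑ g : G, c g • V g) = 0 := by rw [hc, mul_zero, trace_zero]
    rw [Finset.mul_sum, trace_sum] at h0
    simp only [mul_smul_comm, trace_smul, smul_eq_mul, orth, mul_ite, mul_zero] at h0
    rw [Finset.sum_ite_eq' Finset.univ k (fun g => c g * (D : ℂ)),
      if_pos (Finset.mem_univ k)] at h0
    exact (mul_eq_zero.mp h0).resolve_right hDne
  have card_le : Fintype.card G ≤ Module.finrank ℂ (Matrix (Fin D) (Fin D) ℂ) :=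
    hLI.fintype_card_le_finrank
  -- commutation with adjoints
  have hadjcomm : ∀ k g : G, V g * (V k)ᴴ = β k g • ((V k)ᴴ * V g) := by
    intro k g
    calc V g * (V k)ᴴ
        = ((V k)ᴴ * V k) * (V g * (V k)ᴴ) := by rw [hHU, one_mul]
      _ = (V k)ᴴ * ((V k * V g) * (V k)ᴴ) := by rw [mul_assoc, ← mul_assoc (V k)]
      _ = (V k)ᴴ * ((β k g • (V g * V k)) * (V k)ᴴ) := by rw [comm k g]
      _ = β k g • ((V k)ᴴ * (V g * (V k * (V k)ᴴ))) := by
            rw [smul_mul_assoc, mul_smul_comm, mul_assoc]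
      _ = β k g • ((V k)ᴴ * V g) := by rw [hU, mul_one]
  -- core injectivity statement
  have core : ∀ W : Matrix (Fin D) (Fin D) ℂ,
      (∀ g, trace ((V g)ᴴ * W) = 0) → W = 0 := by
    intro W hW
    set T : G → Matrix (Fin D) (Fin D) ℂ := fun h => (V h)ᴴ * W * V h with hT
    set Φ : G → Matrix (Fin D) (Fin D) ℂ := fun k => ∑ h : G, β h k • T h with hΦ
    have conjT : ∀ g h : G, (V g)ᴴ * T h * V g = T (h * g) := by
      intro g h
      have e : (V g)ᴴ * T h * V g = (V h * V g)ᴴ * W * (V h * V g) := by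
        rw [conjTranspose_mul]
        simp only [hT, mul_assoc]
      rw [e, hV h g, conjTranspose_smul, smul_mul_assoc, smul_mul_assoc, mul_smul_comm,
        smul_smul, Complex.star_def, hωconj, one_smul]
    have conjΦ : ∀ k g : G, (V g)ᴴ * Φ k * V g = (β g k)⁻¹ • Φ k := by
      intro k g
      have expand : (V g)ᴴ * Φ k * V g = ∑ h : G, β h k • T (h * g) := by
        simp only [hΦ]
        rw [Finset.mul_sum, Finset.sum_mul]
        refine Finset.sum_congr rfl (fun h _ => ?_)
        rw [mul_smul_comm, smul_mul_assoc, conjT g h]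
      rw [expand, hΦ, Finset.smul_sum]
      refine Fintype.sum_equiv (Equiv.mulRight g) _ _ (fun h => ?_)
      simp only [Equiv.coe_mulRight, βmul, smul_smul]
      congr 1
      rw [mul_comm (β h k), ← mul_assoc, inv_mul_cancel₀ (hβne g k), one_mul]
    have commΦ : ∀ k g : G, Φ k * V g = (β g k)⁻¹ • (V g * Φ k) := by
      intro k g
      calc Φ k * V g = (V g * (V g)ᴴ) * (Φ k * V g) := by rw [hU, one_mul]
        _ = V g * ((V g)ᴴ * Φ k * V g) := by rw [mul_assoc, ← mul_assoc ((V g)ᴴ)]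
        _ = V g * ((β g k)⁻¹ • Φ k) := by rw [conjΦ]
        _ = (β g k)⁻¹ • (V g * Φ k) := by rw [mul_smul_comm]
    have Φ0 : ∀ k, Φ k = 0 := by
      intro k
      set X := (V k)ᴴ * Φ k with hX
      have hcomm : ∀ g, X * V g = V g * X := by
        intro g
        have h1 : X * V g = (β g k)⁻¹ • ((V k)ᴴ * (V g * Φ k)) := by
          rw [hX, mul_assoc, commΦ, mul_smul_comm]
        have h2 : V g * X = (β g k)⁻¹ • ((V k)ᴴ * (V g * Φ k)) := by
          rw [hX, ← mul_assoc, hadjcomm k g, smul_mul_assoc, mul_assoc, βinv g k]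
        rw [h1, h2]
      obtain ⟨x, hx⟩ := hirr X hcomm
      have htr : trace X = 0 := by
        rw [hX, hΦ, Finset.mul_sum, trace_sum]
        refine Finset.sum_eq_zero (fun h _ => ?_)
        rw [mul_smul_comm, trace_smul, smul_eq_mul]
        have e : trace ((V k)ᴴ * T h) = β k h * trace ((V k)ᴴ * W) := by
          calc trace ((V k)ᴴ * T h) = trace ((V k)ᴴ * ((V h)ᴴ * W) * V h) := by
                simp only [hT]
                rw [← mul_assoc, ← mul_assoc]
            _ = trace (V h * ((V k)ᴴ * ((V h)ᴴ * W))) := by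
                rw [trace_mul_comm]
            _ = trace ((V h * (V k)ᴴ) * ((V h)ᴴ * W)) := by rw [mul_assoc]
            _ = trace ((β k h • ((V k)ᴴ * V h)) * ((V h)ᴴ * W)) := by rw [hadjcomm k h]
            _ = β k h * trace (((V k)ᴴ * V h) * ((V h)ᴴ * W)) := by
                rw [smul_mul_assoc, trace_smul, smul_eq_mul]
            _ = β k h * trace (((V k)ᴴ * (V h * (V h)ᴴ)) * W) := by
                rw [mul_assoc, ← mul_assoc (V h), ← mul_assoc]
            _ = β k h * trace ((V k)ᴴ * W) := by rw [hU, mul_one]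
        rw [e, hW k, mul_zero, mul_zero]
      have hxz : x = 0 := by
        have e : trace X = x * (D : ℂ) := by
          rw [hx, trace_smul, trace_one, smul_eq_mul, Fintype.card_fin]
        rw [htr] at e
        exact (mul_eq_zero.mp e.symm).resolve_right hDne
      have hX0 : X = 0 := by rw [hx, hxz, zero_smul]
      have hΦk : Φ k = V k * X := by rw [hX, ← mul_assoc, hU, one_mul]
      rw [hΦk, hX0, mul_zero]
    have h1 : ∑ k : G, Φ k = 0 := Finset.sum_eq_zero (fun k _ => Φ0 k)
    have h2 : ∑ k : G, Φ k = ∑ h : G, (∑ k : G, β h k) • T h := by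
      simp only [hΦ]
      rw [Finset.sum_comm]
      exact Finset.sum_congr rfl (fun h _ => (Finset.sum_smul).symm)
    have h3 : ∑ h : G, (∑ k : G, β h k) • T h = (Fintype.card G : ℂ) • T 1 := by
      rw [Finset.sum_eq_single 1]
      · congr 1
        simp [β1]
      · intro h _ hh
        rw [sumβ h hh, zero_smul]
      · intro habs
        exact absurd (Finset.mem_univ 1) habs
    have h4 : T 1 = W := by
      simp only [hT]
      rw [hV1, conjTranspose_smul, conjTranspose_one, smul_mul_assoc, smul_mul_assoc,
        mul_smul_comm, smul_smul, one_mul, mul_one, Complex.star_def, hωconj, one_smul]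
    have h5 : (Fintype.card G : ℂ) • W = 0 := by
      rw [← h4, ← h3, ← h2, h1]
    rcases smul_eq_zero.mp h5 with h6 | h6
    · exact absurd h6 (Nat.cast_ne_zero.mpr Fintype.card_ne_zero)
    · exact h6
  -- injective linear map Matrix → (G → ℂ) ⇒ D^2 ≤ card G
  have le2 : Module.finrank ℂ (Matrix (Fin D) (Fin D) ℂ) ≤ Module.finrank ℂ (G → ℂ) := by
    let M : Matrix (Fin D) (Fin D) ℂ →ₗ[ℂ] (G → ℂ) :=
      LinearMap.pi fun g => (Matrix.traceLinearMap (Fin D) ℂ ℂ).comp (LinearMap.mulLeft ℂ (V g)ᴴ)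
    have hMinj : Function.Injective M := by
      intro A B hAB
      rw [← sub_eq_zero]
      apply core
      intro g
      have e := congrFun hAB g
      simp only [M, LinearMap.pi_apply, LinearMap.comp_apply, LinearMap.mulLeft_apply,
        Matrix.traceLinearMap_apply] at e
      rw [mul_sub, trace_sub, e, sub_self]
    exact LinearMap.finrank_le_finrank_of_injective hMinj
  have e1 : Module.finrank ℂ (Matrix (Fin D) (Fin D) ℂ) = D ^ 2 := by
    rw [Module.finrank_matrix]
    simp [sq]
  have e2 : Module.finrank ℂ (G → ℂ) = Fintype.card G := Module.finrank_pi ℂ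
  rw [e1] at card_le le2
  rw [e2] at le2
  exact le_antisymm le2 card_le
end

section
/- Let G be a finite abelian group and ω a factor system (2-cocycle valued in U(1)) such that the induced homomorphism φ_ω : G → G* is trivial (φ_ω(g) = 1 for all g). Then ω has trivial cohomology class, i.e., there exists β : G → U(1) with ω(g₁,g₂) = β(g₁)β(g₂)β(g₁g₂)⁻¹. -/
noncomputable instance : DivisibleBy (Additive ℂˣ) ℤ where
  div a n := Additive.ofMul <| Units.mk0
    (Complex.exp (Complex.log ((Additive.toMul a : ℂˣ) : ℂ) / n)) (Complex.exp_ne_zero _)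
  div_zero a := by
    rw [show (0 : Additive ℂˣ) = Additive.ofMul (1 : ℂˣ) from rfl]
    refine congrArg Additive.ofMul ?_
    ext
    simp
  div_cancel {n} a hn := by
    rw [show a = Additive.ofMul (Additive.toMul a) from rfl, ← ofMul_zpow]
    refine congrArg Additive.ofMul ?_
    ext
    push_cast
    simp only [Units.val_mk0, toMul_ofMul]
    rw [← Complex.exp_int_mul, mul_div_cancel₀ _ (by exact_mod_cast hn : (n:ℂ) ≠ 0),
      Complex.exp_log (Units.ne_zero _)]

/-- The central extension of `G` by `ℂˣ` twisted by a 2-cocycle. -/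
@[ext]
structure Tw (G : Type*) where
  g : G
  u : ℂˣ

def twCommGroup {G : Type*} [CommGroup G] (ω : G → G → ℂˣ)
    (hc : ∀ a b c, ω a b * ω (a*b) c = ω b c * ω a (b*c))
    (hs : ∀ a b, ω b a = ω a b)
    (h1 : ∀ g, ω 1 g = 1) : CommGroup (Tw G) where
  mul x y := ⟨x.g * y.g, x.u * y.u * ω x.g y.g⟩
  one := ⟨1, 1⟩
  inv x := ⟨x.g⁻¹, (x.u * ω x.g x.g⁻¹)⁻¹⟩
  mul_assoc x y z := by
    refine Tw.ext (mul_assoc _ _ _) ?_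
    show x.u * y.u * ω x.g y.g * z.u * ω (x.g*y.g) z.g
       = x.u * (y.u * z.u * ω y.g z.g) * ω x.g (y.g*z.g)
    have := hc x.g y.g z.g
    rw [show x.u * y.u * ω x.g y.g * z.u * ω (x.g*y.g) z.g
        = x.u * y.u * z.u * (ω x.g y.g * ω (x.g*y.g) z.g) by
          simp [mul_assoc, mul_comm, mul_left_comm], this]
    simp [mul_assoc, mul_comm, mul_left_comm]
  one_mul x := by
    refine Tw.ext (one_mul _) ?_
    show 1 * x.u * ω 1 x.g = x.u
    rw [h1, one_mul, mul_one]
  mul_one x := by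
    refine Tw.ext (mul_one _) ?_
    show x.u * 1 * ω x.g 1 = x.u
    rw [← hs, h1, mul_one, mul_one]
  inv_mul_cancel x := by
    refine Tw.ext (inv_mul_cancel _) ?_
    show (x.u * ω x.g x.g⁻¹)⁻¹ * x.u * ω x.g⁻¹ x.g = 1
    rw [hs]
    group
  mul_comm x y := by
    refine Tw.ext (mul_comm _ _) ?_
    show x.u * y.u * ω x.g y.g = y.u * x.u * ω y.g x.g
    rw [hs y.g x.g, mul_comm x.u y.u]

/-- If the homomorphism `φ_ω` induced by a U(1)-valued 2-cocycle `ω` on a finite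
abelian group is trivial (i.e. the commutator phases `ω(g',g)/ω(g,g')` all equal 1, so `ω` is
symmetric), then `ω` is a coboundary: `ω(g₁,g₂) = β(g₁)β(g₂)β(g₁g₂)⁻¹` for some
`β : G → U(1)`. -/
theorem stmt_11 {G : Type*} [CommGroup G] [Fintype G] (ω : G → G → ℂ)
    (hω : ∀ g₁ g₂, ‖ω g₁ g₂‖ = 1)
    (hcocycle : ∀ g₁ g₂ g₃, ω g₁ g₂ * ω (g₁ * g₂) g₃ = ω g₂ g₃ * ω g₁ (g₂ * g₃))
    (htriv : ∀ g h, ω h g = ω g h) :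
    ∃ β : G → ℂ, (∀ g, ‖β g‖ = 1) ∧
      ∀ g₁ g₂, ω g₁ g₂ = β g₁ * β g₂ * (β (g₁ * g₂))⁻¹ := by
  have hne : ∀ g h, ω g h ≠ 0 := by
    intro g h h0
    have := hω g h
    rw [h0] at this
    simp at this
  have h11 : ∀ g, ω 1 g = ω 1 1 := by
    intro g
    have := hcocycle 1 1 g
    rw [one_mul, one_mul] at this
    exact (mul_right_cancel₀ (hne 1 g) (by linear_combination this)).symm
  set ω' : G → G → ℂˣ := fun g h =>
    Units.mk0 (ω g h / ω 1 1) (div_ne_zero (hne g h) (hne 1 1)) with hω'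
  have hval : ∀ g h, (ω' g h : ℂ) = ω g h / ω 1 1 := fun g h => rfl
  have hc' : ∀ a b c, ω' a b * ω' (a*b) c = ω' b c * ω' a (b*c) := by
    intro a b c
    ext
    push_cast [hval]
    rw [div_mul_div_comm, div_mul_div_comm, hcocycle a b c]
  have hs' : ∀ a b, ω' b a = ω' a b := by
    intro a b
    ext
    rw [hval, hval, htriv]
  have h1' : ∀ g, ω' 1 g = 1 := by
    intro g
    ext
    rw [hval, h11, div_self (hne 1 1), Units.val_one]
  letI : CommGroup (Tw G) := twCommGroup ω' hc' hs' h1'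
  have mulDef : ∀ x y : Tw G, x * y = ⟨x.g * y.g, x.u * y.u * ω' x.g y.g⟩ :=
    fun x y => rfl
  set i0 : ℂˣ →* Tw G := MonoidHom.mk' (fun a => (⟨1, a⟩ : Tw G)) (by
    intro a b
    rw [mulDef]
    refine Tw.ext (one_mul 1).symm ?_
    simp [h1']) with hi0
  set i : Additive ℂˣ →ₗ[ℤ] Additive (Tw G) :=
    (MonoidHom.toAdditive i0).toIntLinearMap with hi_def
  have hi : Function.Injective i := by
    intro a b h
    have : (⟨1, Additive.toMul a⟩ : Tw G) = (⟨1, Additive.toMul b⟩ : Tw G) := h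
    have := congrArg Tw.u this
    exact Additive.toMul.injective this
  haveI : Module.Injective ℤ (Additive ℂˣ) :=
    Module.Baer.injective (Module.Baer.of_divisible _)
  obtain ⟨r, hr⟩ := Module.Injective.extension_property ℤ (Additive ℂˣ)
    (Additive ℂˣ) (Additive (Tw G)) i hi LinearMap.id
  set β₀ : G → ℂˣ := fun g =>
    Additive.toMul (r (Additive.ofMul (⟨g, 1⟩ : Tw G))) with hβ₀
  have key : ∀ g h, β₀ g * β₀ h = β₀ (g*h) * ω' g h := by
    intro g h
    have e1 : (⟨g, 1⟩ : Tw G) * (⟨h, 1⟩ : Tw G)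
        = (⟨g*h, 1⟩ : Tw G) * (⟨1, ω' g h⟩ : Tw G) := by
      rw [mulDef, mulDef]
      refine Tw.ext (mul_one _).symm ?_
      show 1 * 1 * ω' g h = 1 * ω' g h * ω' (g*h) 1
      rw [← hs' (g*h) 1, h1', one_mul, one_mul, mul_one]
    have e2 := congrArg (fun x : Tw G => r (Additive.ofMul x)) e1
    simp only [ofMul_mul, map_add] at e2
    have e3 : r (i (Additive.ofMul (ω' g h))) = Additive.ofMul (ω' g h) := by
      rw [← LinearMap.comp_apply, hr]; rfl
    have e4 : r (Additive.ofMul ((⟨1, ω' g h⟩ : Tw G))) = Additive.ofMul (ω' g h) := e3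
    rw [e4] at e2
    have := congrArg (fun x : Additive ℂˣ => Additive.toMul x) e2
    simpa [hβ₀, toMul_add] using this
  have keyC : ∀ g h, (β₀ g : ℂ) * (β₀ h : ℂ)
      = (β₀ (g*h) : ℂ) * (ω g h / ω 1 1) := by
    intro g h
    have := congrArg (fun u : ℂˣ => (u : ℂ)) (key g h)
    push_cast at this
    rw [hval] at this
    exact this
  have habs : ∀ g h, (‖(β₀ g : ℂ)‖ : ℝ) * ‖(β₀ h : ℂ)‖
      = ‖(β₀ (g*h) : ℂ)‖ := by
    intro g h
    have := congrArg (fun z : ℂ => ‖z‖) (keyC g h)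
    simp only [norm_mul, norm_div, hω, div_one, mul_one] at this
    exact this
  have hb0 : ∀ g, (β₀ g : ℂ) ≠ 0 := fun g => Units.ne_zero _
  have habs0 : ∀ g, (‖(β₀ g : ℂ)‖ : ℂ) ≠ 0 := by
    intro g
    exact_mod_cast norm_ne_zero_iff.mpr (hb0 g)
  refine ⟨fun g => (β₀ g : ℂ) / ‖(β₀ g : ℂ)‖ * ω 1 1, ?_, ?_⟩
  · intro g
    rw [norm_mul, norm_div, hω 1 1, Complex.norm_real,
      norm_norm, div_self (norm_ne_zero_iff.mpr (hb0 g)), one_mul]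
  · intro g h
    have h2 : (β₀ g : ℂ) * (β₀ h : ℂ) * ω 1 1 = (β₀ (g*h) : ℂ) * ω g h := by
      rw [keyC g h, mul_assoc, div_mul_cancel₀ _ (hne 1 1)]
    have hA : (‖(β₀ g : ℂ)‖ : ℂ) * ‖(β₀ h : ℂ)‖ = ‖(β₀ (g*h) : ℂ)‖ := by
      exact_mod_cast congrArg (fun x : ℝ => (x : ℂ)) (habs g h)
    have n1 := hb0 (g*h)
    have n2 := habs0 g
    have n3 := habs0 h
    have n4 := habs0 (g*h)
    have n5 := hne 1 1
    field_simp
    linear_combination (ω g h * (β₀ (g*h) : ℂ)) * hA -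
      ((‖(β₀ (g*h) : ℂ)‖ : ℂ)) * h2
end

section
/- Let G be a finite abelian group, ω a factor system, and Ω the ordered-product phase defined by V(g_N)···V(g₁) = Ω(g₁,…,g_N)V(g_N···g₁). Suppose two tuples (g₁,…,g_N) and (h₁,…,h_N) agree outside a contiguous block of positions j = m+1,…,m+n and satisfy g_{m+1}···g_{m+n} = h_{m+1}···h_{m+n}. Then Ω(g₁,…,g_N)·Ω(h₁,…,h_N)⁻¹ = Ω⁽ⁿ⁾(g_{m+1},…,g_{m+n})·Ω⁽ⁿ⁾(h_{m+1},…,h_{m+n})⁻¹, where Ω⁽ⁿ⁾ is the analogous phase for the block alone. -/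
/-- Locality of the generalized Kennedy–Tasaki phases.  With `Ω` the ordered
product phase `(L.map V).reverse.prod = Ω L • V L.prod`, if two tuples agree outside a
contiguous block (`L₁ ++ B ++ L₂` versus `L₁ ++ B' ++ L₂` with `B.length = B'.length`) and the
block products agree (`B.prod = B'.prod`), then
`Ω(L₁++B++L₂) · Ω(L₁++B'++L₂)⁻¹ = Ω(B) · Ω(B')⁻¹`. -/
theorem stmt_17 {n : ℕ} {G : Type*} [CommGroup G] (hn : 0 < n)
    (V : G → Matrix (Fin n) (Fin n) ℂ) (ω : G → G → ℂ)
    (hω : ∀ g₁ g₂, ‖ω g₁ g₂‖ = 1)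
    (hunit : ∀ g, IsUnit (V g))
    (hV : ∀ g₁ g₂, V g₁ * V g₂ = ω g₁ g₂ • V (g₁ * g₂))
    (Ω : List G → ℂ)
    (hΩ : ∀ L : List G, (L.map V).reverse.prod = Ω L • V L.prod)
    (L₁ L₂ B B' : List G) (hlen : B.length = B'.length) (hprod : B.prod = B'.prod) :
    Ω (L₁ ++ B ++ L₂) * (Ω (L₁ ++ B' ++ L₂))⁻¹ = Ω B * (Ω B')⁻¹ := by
  haveI : NeZero n := ⟨hn.ne'⟩
  have hVne : ∀ g, V g ≠ 0 := fun g => (hunit g).ne_zero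
  have hωne : ∀ a b, ω a b ≠ 0 := by
    intro a b h
    have := hω a b
    rw [h] at this
    simp at this
  have hΩne : ∀ L : List G, Ω L ≠ 0 := by
    intro L h
    have hu : IsUnit ((L.map V).reverse.prod) := by
      apply List.prod_isUnit
      intro m hm
      rw [List.mem_reverse, List.mem_map] at hm
      obtain ⟨g, -, rfl⟩ := hm
      exact hunit g
    rw [hΩ L, h, zero_smul] at hu
    exact hu.ne_zero rfl
  have key : ∀ A C D : List G, Ω (A ++ C ++ D)
      = Ω D * Ω C * Ω A * ω C.prod A.prod * ω D.prod (C.prod * A.prod) := by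
    intro A C D
    have h1 : ((A ++ C ++ D).map V).reverse.prod
        = (D.map V).reverse.prod * ((C.map V).reverse.prod * (A.map V).reverse.prod) := by
      simp [List.reverse_append, List.prod_append, mul_assoc]
    rw [hΩ, hΩ, hΩ, hΩ] at h1
    have h2 : (Ω D • V D.prod) * (Ω C • V C.prod * (Ω A • V A.prod))
        = (Ω D * Ω C * Ω A * ω C.prod A.prod * ω D.prod (C.prod * A.prod))
          • V (D.prod * (C.prod * A.prod)) := by
      simp only [smul_mul_assoc, mul_smul_comm, hV, smul_smul]
      ring_nf
    rw [h2] at h1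
    have hp : (A ++ C ++ D).prod = D.prod * (C.prod * A.prod) := by
      simp [List.prod_append, mul_assoc, mul_comm, mul_left_comm]
    rw [hp] at h1
    exact smul_left_injective ℂ (hVne (D.prod * (C.prod * A.prod))) h1
  have k1 := key L₁ B L₂
  have k2 := key L₁ B' L₂
  rw [hprod] at k1
  rw [k1, k2, ← div_eq_mul_inv, ← div_eq_mul_inv,
    div_eq_div_iff (mul_ne_zero (mul_ne_zero (mul_ne_zero (mul_ne_zero (hΩne L₂) (hΩne B'))
      (hΩne L₁)) (hωne B'.prod L₁.prod)) (hωne L₂.prod (B'.prod * L₁.prod))) (hΩne B')]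
  ring
end
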